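/- Let X be a totally bounded metric space and f : Y → X an expansive map from a dense subset Y of X. Then f extends uniquely to an isometry of X into the completion of X. -/

import Mathlib

/-! Replace `f` by a map `g : Y → Y` moving each value `f p` by less than `δ`; then `g` is
expansive up to `2δ`. Since `Y × Y` is totally bounded, the `g`-orbit of a pair `(x, y)` comes
back `ε`-close to one of its earlier points within `N` steps, where `N` depends on `ε` only.
Pulling this return back through the approximate expansiveness shows that `g`, hence `f`,
stretches `dist x y` by at most `ε + O(N δ)`, and `δ` is chosen after `N`. Finally, an isometry
defined on a dense subset extends uniquely to the whole space when the target is complete. -/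
open Set Filter Function

theorem TotallyBounded.prod {α β : Type*} [UniformSpace α] [UniformSpace β] {s : Set α} {t : Set β}
    (hs : TotallyBounded s) (ht : TotallyBounded t) : TotallyBounded (s ×ˢ t) := by
  refine totallyBounded_iff_ultrafilter.2 fun f hf => ?_
  have hfst : Cauchy (f.map Prod.fst : Filter α) := totallyBounded_iff_ultrafilter.1 hs _ <|
    (map_mono hf).trans <| by simpa using fst_image_prod_subset s t
  have hsnd : Cauchy (f.map Prod.snd : Filter β) := totallyBounded_iff_ultrafilter.1 ht _ <|
    (map_mono hf).trans <| by simpa using snd_image_prod_subset s t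
  exact (hfst.prod hsnd).mono le_prod_map_fst_snd

section PseudoMetric

variable {α : Type*} [PseudoMetricSpace α]

theorem TotallyBounded.exists_forall_exists_dist_lt {s : Set α} (hs : TotallyBounded s) {ε : ℝ}
    (hε : 0 < ε) : ∃ N : ℕ, ∀ u : ℕ → α, (∀ i, u i ∈ s) →
      ∃ m n, m < n ∧ n ≤ N ∧ dist (u m) (u n) < ε := by
  obtain ⟨t, htfin, hcov⟩ := Metric.totallyBounded_iff.1 hs (ε / 2) (half_pos hε)
  refine ⟨htfin.toFinset.card, fun u hu => ?_⟩
  have hnear : ∀ i, ∃ c ∈ t, u i ∈ Metric.ball c (ε / 2) := fun i => by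
    simpa only [mem_iUnion₂, exists_prop] using hcov (hu i)
  choose c hct hc using hnear
  obtain ⟨i, hi, j, hj, hij, hcij⟩ := Finset.exists_ne_map_eq_of_card_lt_of_maps_to
    (s := Finset.range (htfin.toFinset.card + 1)) (t := htfin.toFinset) (by simp)
    (f := c) (fun i _ => by simpa using hct i)
  have hdist : dist (u i) (u j) < ε := by
    have hi := Metric.mem_ball.1 (hc i)
    have hj := Metric.mem_ball.1 (hc j)
    rw [hcij] at hi
    linarith [dist_triangle_right (u i) (u j) (c j)]
  simp only [Finset.mem_range, Nat.lt_succ_iff] at hi hj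
  rcases hij.lt_or_gt with h | h
  · exact ⟨i, j, h, hj, hdist⟩
  · exact ⟨j, i, h, hi, dist_comm (u i) (u j) ▸ hdist⟩

theorem dist_le_dist_iterate_add {g : α → α} {η : ℝ} (hg : ∀ a b, dist a b ≤ dist (g a) (g b) + η)
    (n : ℕ) (a b : α) : dist a b ≤ dist (g^[n] a) (g^[n] b) + n * η := by
  induction n with
  | zero => simp
  | succ n ih =>
    rw [iterate_succ_apply', iterate_succ_apply']
    push_cast
    linarith [hg (g^[n] a) (g^[n] b)]

theorem TotallyBounded.exists_dist_le_of_approx_expansive (h : TotallyBounded (univ : Set α))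
    {ε : ℝ} (hε : 0 < ε) : ∃ N : ℕ, ∀ (g : α → α) (η : ℝ),
      (∀ a b, dist a b ≤ dist (g a) (g b) + η) →
        ∀ a b, dist (g a) (g b) ≤ dist a b + ε + N * η := by
  obtain ⟨N, hN⟩ := (h.prod h).exists_forall_exists_dist_lt (half_pos hε)
  refine ⟨2 * N, fun g η hg a b => ?_⟩
  have hη : 0 ≤ η := by simpa using hg a a
  obtain ⟨m, n, hmn, hnN, hclose⟩ := hN (fun i => (g^[i] a, g^[i] b)) (by simp)
  obtain ⟨k, rfl⟩ := Nat.exists_eq_add_of_lt hmn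
  have hsplit : ∀ x, g^[m + k + 1] x = g^[m] (g^[k + 1] x) := fun x => by
    rw [add_assoc, iterate_add_apply]
  rw [hsplit, hsplit, Prod.dist_eq, max_lt_iff] at hclose
  have hreturn_a := dist_le_dist_iterate_add hg m (g^[k + 1] a) a
  have hreturn_b := dist_le_dist_iterate_add hg m b (g^[k + 1] b)
  have hstep : dist (g a) (g b) ≤ dist (g^[k + 1] a) (g^[k + 1] b) + k * η := by
    simpa only [iterate_succ_apply] using dist_le_dist_iterate_add hg k (g a) (g b)
  have hmk : (2 * m + k : ℝ) * η ≤ 2 * N * η :=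
    mul_le_mul_of_nonneg_right (by exact_mod_cast (by omega : 2 * m + k ≤ 2 * N)) hη
  rw [dist_comm (g^[m] a)] at hclose
  push_cast
  linarith [dist_triangle4 (g^[k + 1] a) a b (g^[k + 1] b), hclose.1, hclose.2]

theorem Dense.isometry_of_expansive {Y : Set α} (hα : TotallyBounded (univ : Set α)) (hY : Dense Y)
    {f : Y → α} (hf : ∀ x y : Y, dist (x : α) (y : α) ≤ dist (f x) (f y)) : Isometry f := by
  have hYtb : TotallyBounded (univ : Set Y) := by
    simpa using totallyBounded_preimage isUniformEmbedding_subtype_val.isUniformInducing hα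
  refine Isometry.of_dist_eq fun x y => le_antisymm ?_ (hf x y)
  refine le_of_forall_pos_le_add fun ε hε => ?_
  obtain ⟨N, hN⟩ := hYtb.exists_dist_le_of_approx_expansive (half_pos hε)
  set δ := ε / (4 * (N + 1)) with hδ
  have hδpos : 0 < δ := by positivity
  have happrox : ∀ p : Y, ∃ q : Y, dist (f p) q < δ := fun p => by
    obtain ⟨q, hqY, hq⟩ := hY.exists_dist_lt (f p) hδpos
    exact ⟨⟨q, hqY⟩, hq⟩
  choose g hg using happrox
  have hfg : ∀ p q, dist (f p) (f q) ≤ dist (g p : α) (g q) + 2 * δ := fun p q => by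
    linarith [dist_triangle4 (f p) (g p) (g q) (f q), hg p, dist_comm (f q) (g q : α) ▸ hg q]
  have hg_exp : ∀ p q, dist p q ≤ dist (g p) (g q) + 2 * δ := fun p q =>
    (hf p q).trans (hfg p q)
  have hδN : (N + 1) * (2 * δ) = ε / 2 := by
    rw [hδ]; field_simp; ring
  linarith [hfg x y, hN g (2 * δ) hg_exp x y, Subtype.dist_eq (g x) (g y)]

end PseudoMetric

theorem Dense.existsUnique_isometry_extension {X Z : Type*} [PseudoMetricSpace X] [MetricSpace Z]
    [CompleteSpace Z] {Y : Set X} (hY : Dense Y) {g : Y → Z} (hg : Isometry g) :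
    ∃! F : X → Z, Isometry F ∧ ∀ y : Y, F y = g y := by
  have he : IsUniformInducing ((↑) : Y → X) := isUniformEmbedding_subtype_val.isUniformInducing
  set F := (he.isDenseInducing hY.denseRange_val).extend g
  have hFc : Continuous F := (uniformContinuous_uniformly_extend he hY.denseRange_val
    hg.uniformContinuous).continuous
  have hFg : ∀ y : Y, F y = g y := uniformly_extend_of_ind he hY.denseRange_val hg.uniformContinuous
  have hFiso : Isometry F := by
    have hdist : (fun p : X × X => dist (F p.1) (F p.2)) = fun p => dist p.1 p.2 := by
      refine Continuous.ext_on (hY.prod hY) (by fun_prop) continuous_dist fun p hp => ?_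
      simpa [hFg ⟨_, hp.1⟩, hFg ⟨_, hp.2⟩, Subtype.dist_eq] using hg.dist_eq ⟨_, hp.1⟩ ⟨_, hp.2⟩
    exact Isometry.of_dist_eq fun a b => congrFun hdist (a, b)
  refine ⟨F, ⟨hFiso, hFg⟩, fun G ⟨hG, hGg⟩ => Continuous.ext_on hY hG.continuous hFc ?_⟩
  exact fun y hy => (hGg ⟨y, hy⟩).trans (hFg ⟨y, hy⟩).symm

theorem expansive_extends_to_isometry {X : Type*} [MetricSpace X]
    (hX : TotallyBounded (Set.univ : Set X))
    (Y : Set X) (hY : Dense Y)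
    (f : Y → X) (hf : ∀ x y : Y, dist (x : X) (y : X) ≤ dist (f x) (f y)) :
    ∃! F : X → UniformSpace.Completion X,
      Isometry F ∧ ∀ y : Y, F (y : X) = (f y : UniformSpace.Completion X) :=
  hY.existsUnique_isometry_extension <|
    UniformSpace.Completion.coe_isometry.comp (hY.isometry_of_expansive hX hf)
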